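/- Let T be a triangulated category, let X and Y be thick subcategories of T, assume that the subcategory of extensions X * Y is a triangulated subcategory of T, and let Q : T → T/(X ∩ Y) be the Verdier quotient functor. Then Q(X) * Q(Y) = Q(T) (i.e. every object of the quotient lies in Q(X) * Q(Y)) if and only if X * Y = T. -/

import Mathlib

/-!
Only the forward direction needs an argument. Write `Q` for the quotient functor and suppose
`a ⟶ Q c ⟶ b ⟶ a⟦1⟧` is distinguished with `a ≅ Q x`, `b ≅ Q y`, `x ∈ X`, `y ∈ Y`. The
morphism `Q c ⟶ Q y` is a left fraction `c ⟶ y' ⟵ y` whose denominator has its cone in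
`X ∩ Y ⊆ Y`, so `y' ∈ Y`. Completing `c ⟶ y'` to a distinguished triangle `z ⟶ c ⟶ y'` and
comparing its image with the given triangle gives `Q z ≅ a ≅ Q x`. Finally, because `X ∩ Y` is
thick, a morphism inverted by `Q` has its cone in `X ∩ Y`; hence `Q z ≅ Q x` with `x ∈ X`
forces `z ∈ X`, and `c ∈ X * Y`.
-/

namespace Paper

open CategoryTheory Limits Triangulated Pretriangulated ZeroObject

universe w v u

variable {C : Type u} [Category.{v} C] [HasZeroObject C] [Preadditive C] [HasShift C ℤ]
  [∀ n : ℤ, (shiftFunctor C n).Additive] [Pretriangulated C]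

/-- The subcategory of extensions `X * Y`: objects `e` admitting a distinguished triangle
`x ⟶ e ⟶ y ⟶ x⟦1⟧` with `x ∈ X` and `y ∈ Y`. -/
def star (X Y : Set C) : Set C :=
  {e | ∃ (x y : C) (_ : x ∈ X) (_ : y ∈ Y) (f : x ⟶ e) (g : e ⟶ y) (h : y ⟶ x⟦(1 : ℤ)⟧),
    Triangle.mk f g h ∈ distTriang C}

/-- A (strictly full) triangulated subcategory: a class of objects containing `0`, closed
under isomorphisms, suspension, desuspension and extensions. -/
structure IsTriangulatedSubcat (S : Set C) : Prop where
  zero_mem : (0 : C) ∈ S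
  mem_of_iso : ∀ {a b : C}, (a ≅ b) → a ∈ S → b ∈ S
  shift_mem : ∀ {a : C}, a ∈ S → a⟦(1 : ℤ)⟧ ∈ S
  unshift_mem : ∀ {a : C}, a ∈ S → a⟦(-1 : ℤ)⟧ ∈ S
  ext₂ : ∀ {a e b : C} (f : a ⟶ e) (g : e ⟶ b) (h : b ⟶ a⟦(1 : ℤ)⟧),
    (Triangle.mk f g h ∈ distTriang C) → a ∈ S → b ∈ S → e ∈ S

/-- A thick subcategory: a triangulated subcategory closed under direct summands
(equivalently, retracts). -/
structure IsThickSubcat (S : Set C) extends IsTriangulatedSubcat S : Prop where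
  mem_of_retract : ∀ {a s : C}, s ∈ S → (∃ (i : a ⟶ s) (p : s ⟶ a), i ≫ p = 𝟙 a) → a ∈ S

/-- `(U, V)` is a stable t-structure in the (triangulated sub)category whose class of
objects is `S`: both are triangulated subcategories contained in `S`, `Hom(U, V) = 0`
and `U * V = S`. -/
structure IsStableTStructureIn (S U V : Set C) : Prop where
  subsetU : U ⊆ S
  subsetV : V ⊆ S
  triU : IsTriangulatedSubcat U
  triV : IsTriangulatedSubcat V
  hom_zero : ∀ {u v : C}, u ∈ U → v ∈ V → ∀ f : u ⟶ v, f = 0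
  star_eq : star U V = S

lemma IsTriangulatedSubcat.shift_all {S : Set C} (hS : IsTriangulatedSubcat S) (a : C) (n : ℤ)
    (ha : a ∈ S) : a⟦n⟧ ∈ S := by
  induction n using Int.induction_on with
  | zero => exact hS.mem_of_iso ((shiftFunctorZero C ℤ).app a).symm ha
  | succ i hi =>
      exact hS.mem_of_iso ((shiftFunctorAdd' C (i : ℤ) 1 ((i : ℤ) + 1) rfl).app a).symm
        (hS.shift_mem hi)
  | pred i hi =>
      exact hS.mem_of_iso
        ((shiftFunctorAdd' C (-(i : ℤ)) (-1) (-(i : ℤ) - 1) (by ring)).app a).symm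
        (hS.unshift_mem hi)

/-- The Mathlib `Triangulated.Subcategory` associated to a class of objects satisfying
`IsTriangulatedSubcat`. -/
def IsTriangulatedSubcat.toSubcategory {S : Set C} (hS : IsTriangulatedSubcat S) :
    ObjectProperty C :=
  (· ∈ S)

instance IsTriangulatedSubcat.isTriangulated_toSubcategory {S : Set C}
    (hS : IsTriangulatedSubcat S) : hS.toSubcategory.IsTriangulated where
  exists_zero := ⟨0, isZero_zero C, hS.zero_mem⟩
  isStableUnderShiftBy a := ⟨fun X hX => hS.shift_all X a hX⟩
  ext₂' T hT h₁ h₃ := ObjectProperty.le_isoClosure _ _ (hS.ext₂ T.mor₁ T.mor₂ T.mor₃ hT h₁ h₃)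

lemma IsTriangulatedSubcat.inter {X Y : Set C} (hX : IsTriangulatedSubcat X)
    (hY : IsTriangulatedSubcat Y) : IsTriangulatedSubcat (X ∩ Y) where
  zero_mem := ⟨hX.zero_mem, hY.zero_mem⟩
  mem_of_iso := fun e h => ⟨hX.mem_of_iso e h.1, hY.mem_of_iso e h.2⟩
  shift_mem := fun h => ⟨hX.shift_mem h.1, hY.shift_mem h.2⟩
  unshift_mem := fun h => ⟨hX.unshift_mem h.1, hY.unshift_mem h.2⟩
  ext₂ := fun f g h hT ha hb => ⟨hX.ext₂ f g h hT ha.1 hb.1, hY.ext₂ f g h hT ha.2 hb.2⟩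

/-- The Verdier quotient of `C` by the triangulated subcategory `S`. -/
abbrev VerdierQuotient {S : Set C} (hS : IsTriangulatedSubcat S) : Type _ :=
  hS.toSubcategory.trW.Localization

/-- The Verdier quotient functor. -/
noncomputable abbrev Vq {S : Set C} (hS : IsTriangulatedSubcat S) : C ⥤ VerdierQuotient hS :=
  hS.toSubcategory.trW.Q

/-- The essential image of a class of objects under a functor (the closure under
isomorphisms of the image). -/
def QSet {D : Type*} [Category D] (L : C ⥤ D) (S : Set C) : Set D :=
  {d | ∃ s ∈ S, Nonempty (L.obj s ≅ d)}

/-- The right perpendicular class `X^⊥`. -/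
def rightPerp (X : Set C) : Set C := {t | ∀ {x : C}, x ∈ X → ∀ f : x ⟶ t, f = 0}

/-- The left perpendicular class `^⊥X`. -/
def leftPerp (X : Set C) : Set C := {t | ∀ {x : C}, x ∈ X → ∀ f : t ⟶ x, f = 0}

lemma IsTriangulatedSubcat.ext₁ {S : Set C} (hS : IsTriangulatedSubcat S) {T : Triangle C}
    (hT : T ∈ distTriang C) (h₂ : T.obj₂ ∈ S) (h₃ : T.obj₃ ∈ S) : T.obj₁ ∈ S :=
  hS.ext₂ _ _ _ (inv_rot_of_distTriang T hT) (hS.unshift_mem h₃) h₂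

lemma IsThickSubcat.inter {X Y : Set C} (hX : IsThickSubcat X) (hY : IsThickSubcat Y) :
    IsThickSubcat (X ∩ Y) where
  toIsTriangulatedSubcat := hX.toIsTriangulatedSubcat.inter hY.toIsTriangulatedSubcat
  mem_of_retract hs hr := ⟨hX.mem_of_retract hs.1 hr, hY.mem_of_retract hs.2 hr⟩

lemma IsTriangulatedSubcat.mem_iff_of_trW {T : Set C} (hT : IsTriangulatedSubcat T)
    {P : ObjectProperty C} (hPT : ∀ z, P z → z ∈ T) {a b : C} {s : a ⟶ b} (hs : P.trW s) :
    a ∈ T ↔ b ∈ T := by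
  obtain ⟨z, g, h, hdist, hz⟩ := hs
  exact ⟨fun ha => hT.ext₂ _ _ _ hdist ha (hPT z hz),
    fun hb => hT.ext₁ hdist hb (hPT z hz)⟩

lemma mem_star_of_distTriang {X Y : Set C} {T : Triangle C} (hT : T ∈ distTriang C)
    (h₁ : T.obj₁ ∈ X) (h₃ : T.obj₃ ∈ Y) {c : C} (e : T.obj₂ ≅ c) : c ∈ star X Y :=
  ⟨_, _, h₁, h₃, T.mor₁ ≫ e.hom, e.inv ≫ T.mor₂, T.mor₃, isomorphic_distinguished _ hT _
    (Triangle.isoMk _ _ (Iso.refl T.obj₁) e.symm (Iso.refl T.obj₃)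
      (by simp [Triangle.mk]) (by simp [Triangle.mk]) (by simp [Triangle.mk]))⟩

section

variable {D : Type*} [Category D] [HasZeroObject D] [Preadditive D] [HasShift D ℤ]
  [∀ n : ℤ, (shiftFunctor D n).Additive] [Pretriangulated D]

lemma map_mem_star (F : C ⥤ D) [F.CommShift ℤ] [F.IsTriangulated] {X Y : Set C} {c : C}
    (hc : c ∈ star X Y) : F.obj c ∈ star (QSet F X) (QSet F Y) := by
  obtain ⟨x, y, hx, hy, f, g, h, hT⟩ := hc
  exact mem_star_of_distTriang (X := QSet F X) (Y := QSet F Y) (F.map_distinguished _ hT)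
    ⟨x, hx, ⟨Iso.refl _⟩⟩ ⟨y, hy, ⟨Iso.refl _⟩⟩ (Iso.refl _)

lemma star_QSet_eq_univ (F : C ⥤ D) [F.CommShift ℤ] [F.IsTriangulated] [F.EssSurj]
    {X Y : Set C} (h : star X Y = Set.univ) : star (QSet F X) (QSet F Y) = Set.univ := by
  refine Set.eq_univ_of_forall fun d => ?_
  obtain ⟨x, y, hx, hy, f, g, k, hT⟩ := map_mem_star F (h ▸ Set.mem_univ (F.objPreimage d))
  exact mem_star_of_distTriang hT hx hy (F.objObjPreimageIso d)

lemma nonempty_iso_obj₁_of_iso₂₃ {T₁ T₂ : Triangle D} (hT₁ : T₁ ∈ distTriang D)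
    (hT₂ : T₂ ∈ distTriang D) (e₂ : T₁.obj₂ ≅ T₂.obj₂) (e₃ : T₁.obj₃ ≅ T₂.obj₃)
    (comm : T₁.mor₂ ≫ e₃.hom = e₂.hom ≫ T₂.mor₂) : Nonempty (T₁.obj₁ ≅ T₂.obj₁) :=
  ⟨(shiftFunctor D (1 : ℤ)).preimageIso (Triangle.π₃.mapIso (isoTriangleOfIso₁₂ _ _
    (rot_of_distTriang _ hT₁) (rot_of_distTriang _ hT₂) e₂ e₃ comm))⟩

end

variable [IsTriangulated C]

lemma IsThickSubcat.mem_of_isZero_Vq_obj {S : Set C} (hS : IsThickSubcat S) {w : C}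
    (hw : IsZero ((Vq hS.toIsTriangulatedSubcat).obj w)) : w ∈ S := by
  set L := Vq hS.toIsTriangulatedSubcat
  -- `L` identifies `𝟙 w` with `0`, so some `s : w ⟶ z` in `trW` vanishes, and then `w⟦1⟧` is
  -- a direct summand of the cone of `s`.
  obtain ⟨z, s, ⟨Z, g, h, hT, hZ⟩, hs⟩ :=
    (MorphismProperty.map_eq_iff_postcomp L hS.toIsTriangulatedSubcat.toSubcategory.trW
      (𝟙 w) 0).1 (by rw [L.map_id, L.map_zero]; exact hw.eq_of_src _ _)
  simp only [Category.id_comp, zero_comp] at hs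
  subst hs
  have : Epi h := Triangle.epi₃ _ hT rfl
  have := isSplitEpi_of_epi h
  have hw₁ : w⟦(1 : ℤ)⟧ ∈ S := hS.mem_of_retract hZ ⟨section_ h, h, IsSplitEpi.id h⟩
  exact hS.mem_of_iso ((shiftFunctorCompIsoId C (1 : ℤ) (-1) (by norm_num)).app w)
    (hS.unshift_mem hw₁)

lemma IsThickSubcat.trW_of_isIso_map {S : Set C} (hS : IsThickSubcat S) {a b : C} (f : a ⟶ b)
    [IsIso ((Vq hS.toIsTriangulatedSubcat).map f)] :
    hS.toIsTriangulatedSubcat.toSubcategory.trW f := by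
  obtain ⟨Z, g, h, hT⟩ := distinguished_cocone_triangle f
  exact ⟨Z, g, h, hT, hS.mem_of_isZero_Vq_obj
    (Triangle.isZero₃_of_isIso₁ _ ((Vq _).map_distinguished _ hT) ‹_›)⟩

lemma exists_map_eq_comp_of_mem_QSet {S T : Set C} (hS : IsTriangulatedSubcat S)
    (hT : IsTriangulatedSubcat T) (hST : S ⊆ T) {c : C} {d : VerdierQuotient hS}
    (hd : d ∈ QSet (Vq hS) T) (g : (Vq hS).obj c ⟶ d) :
    ∃ (y : C) (_ : y ∈ T) (f : c ⟶ y) (e : d ≅ (Vq hS).obj y), g ≫ e.hom = (Vq hS).map f := by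
  obtain ⟨x, hx, ⟨ex⟩⟩ := hd
  obtain ⟨φ, hφ⟩ := Localization.exists_leftFraction (Vq hS) hS.toSubcategory.trW (g ≫ ex.inv)
  have := Localization.inverts (Vq hS) hS.toSubcategory.trW φ.s φ.hs
  refine ⟨φ.Y', (hT.mem_iff_of_trW (fun z hz => hST hz) φ.hs).1 hx, φ.f,
    ex.symm ≪≫ asIso ((Vq hS).map φ.s), ?_⟩
  rw [← φ.map_comp_map_s (Vq hS) (Localization.inverts _ _), ← hφ]
  simp

lemma IsThickSubcat.mem_of_obj_mem_QSet {S T : Set C} (hS : IsThickSubcat S)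
    (hT : IsTriangulatedSubcat T) (hST : S ⊆ T) {t : C}
    (ht : (Vq hS.toIsTriangulatedSubcat).obj t ∈ QSet (Vq hS.toIsTriangulatedSubcat) T) :
    t ∈ T := by
  obtain ⟨y, hy, f, e, hf⟩ :=
    exists_map_eq_comp_of_mem_QSet hS.toIsTriangulatedSubcat hT hST ht (𝟙 _)
  have : IsIso ((Vq hS.toIsTriangulatedSubcat).map f) := by rw [← hf]; infer_instance
  exact (hT.mem_iff_of_trW (fun z hz => hST hz) (hS.trW_of_isIso_map f)).2 hy

lemma IsThickSubcat.mem_star_of_obj_mem_star {S X Y : Set C} (hS : IsThickSubcat S)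
    (hX : IsTriangulatedSubcat X) (hY : IsTriangulatedSubcat Y) (hSX : S ⊆ X) (hSY : S ⊆ Y)
    {c : C} (hc : (Vq hS.toIsTriangulatedSubcat).obj c ∈
      star (QSet (Vq hS.toIsTriangulatedSubcat) X) (QSet (Vq hS.toIsTriangulatedSubcat) Y)) :
    c ∈ star X Y := by
  set L := Vq hS.toIsTriangulatedSubcat
  obtain ⟨a, b, ⟨x, hx, ⟨ex⟩⟩, hb, f, g, h, hT⟩ := hc
  obtain ⟨y, hy, g', e, hg'⟩ := exists_map_eq_comp_of_mem_QSet _ hY hSY hb g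
  obtain ⟨z, f', h', hT'⟩ := distinguished_cocone_triangle₁ g'
  obtain ⟨ez⟩ := nonempty_iso_obj₁_of_iso₂₃ hT (L.map_distinguished _ hT') (Iso.refl _) e
    (hg'.trans (Category.id_comp _).symm)
  have hz : z ∈ X := hS.mem_of_obj_mem_QSet hX hSX ⟨x, hx, ⟨ex ≪≫ ez⟩⟩
  exact mem_star_of_distTriang hT' hz hy (Iso.refl _)

theorem statement4_general {X Y : Set C} (hX : IsThickSubcat X) (hY : IsThickSubcat Y) :
    star (QSet (Vq (hX.toIsTriangulatedSubcat.inter hY.toIsTriangulatedSubcat)) X) (QSet (Vq (hX.toIsTriangulatedSubcat.inter hY.toIsTriangulatedSubcat)) Y) = Set.univ ↔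
      star X Y = Set.univ := by
  have hS := hX.inter hY
  refine ⟨fun h => Set.eq_univ_of_forall fun c => ?_, star_QSet_eq_univ _⟩
  exact hS.mem_star_of_obj_mem_star hX.toIsTriangulatedSubcat hY.toIsTriangulatedSubcat
    Set.inter_subset_left Set.inter_subset_right (h ▸ Set.mem_univ _)

/-- If `X`, `Y` are thick subcategories of `C` such that `X * Y` is a triangulated
subcategory, and `Q : C ⥤ C/(X ∩ Y)` is the Verdier quotient functor, then
`Q(X) * Q(Y) = Q(C)` if and only if `X * Y = C`. -/
theorem statement4 {X Y : Set C} (hX : IsThickSubcat X) (hY : IsThickSubcat Y)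
    (hXY : IsTriangulatedSubcat (star X Y)) :
    star (QSet (Vq (hX.toIsTriangulatedSubcat.inter hY.toIsTriangulatedSubcat)) X) (QSet (Vq (hX.toIsTriangulatedSubcat.inter hY.toIsTriangulatedSubcat)) Y) = Set.univ ↔
      star X Y = Set.univ :=
  statement4_general hX hY

end Paper
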